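/- Let ℂ^L carry a nondegenerate bilinear form, symmetric (and set ε = 1) or alternating (and set ε = −1). Let F be a linear operator on (ℂ^L)^{⊗l} such that Q_{ij} ∘ F = 0 for all distinct i,j ∈ {1,…,l}. Number the tensor factors of (ℂ^L)^{⊗(l+1)} by 1,…,l+1 and let 1⊗F act in the factors 2,…,l+1. Then for every x ∈ ℂ with x ≠ ε/2 and x ≠ −ε/2, the identity (1 + (x − ε/2)^{-1} Σ_{k=1}^{l} Q_{1,k+1}) · (1 − (x + ε/2)^{-1} Σ_{k=1}^{l} P_{1,k+1}) · (1⊗F) = (1 − (x + ε/2)^{-1} Σ_{k=1}^{l} (P_{1,k+1} − Q_{1,k+1})) · (1⊗F) holds for operators on (ℂ^L)^{⊗(l+1)}. -/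

import Mathlib

open scoped BigOperators
open scoped Classical
open Matrix

noncomputable section

/-! ### The group algebra of the symmetric group -/

/-- The group algebra `ℂ S_l` of the symmetric group of `{1,…,l}`. -/
abbrev GA (l : ℕ) : Type := MonoidAlgebra ℂ (Equiv.Perm (Fin l))

/-- The transposition `(i j)`, as an element of the group algebra over `R`. -/
def swapElt (R : Type) [CommSemiring R] {l : ℕ} (i j : Fin l) :
    MonoidAlgebra R (Equiv.Perm (Fin l)) :=
  MonoidAlgebra.of R (Equiv.Perm (Fin l)) (Equiv.swap i j)

/-! ### Partitions and standard tableaux -/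

/-- A partition: an antitone sequence of parts (0-based indexing),
with finitely many nonzero parts. -/
def IsPartitionFun (lam : ℕ → ℕ) : Prop :=
  Antitone lam ∧ ∃ r, ∀ i, r ≤ i → lam i = 0

/-- A partition of `l` (0-based indexing of the parts). -/
def IsPartitionOf (l : ℕ) (lam : ℕ → ℕ) : Prop :=
  Antitone lam ∧ lam l = 0 ∧ ∑ i ∈ Finset.range l, lam i = l

/-- `conjP lam j` is the 1-based conjugate part `λ'_{j+1}`, i.e. the length
of the `(j+1)`-st column of the Young diagram of `λ`. -/
def conjP (lam : ℕ → ℕ) (j : ℕ) : ℕ := Nat.card {i : ℕ // j < lam i}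

/-- A standard tableau of skew shape `λ/μ` with `n` boxes, in 0-based matrix
coordinates.  `pos k` is the box (row, column) containing the entry `k+1`;
entries increase left to right along rows and top to bottom along columns.
Taking `μ = 0` gives standard tableaux of the straight shape `λ`. -/
structure SkewStdTableau (n : ℕ) (mu lam : ℕ → ℕ) where
  pos : Fin n → ℕ × ℕ
  mem_lower : ∀ k, mu (pos k).1 ≤ (pos k).2
  mem_upper : ∀ k, (pos k).2 < lam (pos k).1
  inj : Function.Injective pos
  surj : ∀ i j : ℕ, mu i ≤ j → j < lam i → ∃ k, pos k = (i, j)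
  row_lt : ∀ k m : Fin n, (pos k).1 = (pos m).1 → (pos k).2 < (pos m).2 → k < m
  col_lt : ∀ k m : Fin n, (pos k).2 = (pos m).2 → (pos k).1 < (pos m).1 → k < m

namespace SkewStdTableau

variable {n : ℕ} {mu lam : ℕ → ℕ}

/-- The content `j - i` of the box containing the entry `k+1`. -/
def content (T : SkewStdTableau n mu lam) (k : Fin n) : ℤ :=
  ((T.pos k).2 : ℤ) - ((T.pos k).1 : ℤ)

/-- `T` is the row tableau: the entries are ordered by rows, left to right
within each row. -/
def IsRowTableau (T : SkewStdTableau n mu lam) : Prop :=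
  ∀ k m : Fin n, k < m ↔
    ((T.pos k).1 < (T.pos m).1 ∨ ((T.pos k).1 = (T.pos m).1 ∧ (T.pos k).2 < (T.pos m).2))

/-- `T` is the column tableau: the entries are ordered by columns. -/
def IsColTableau (T : SkewStdTableau n mu lam) : Prop :=
  ∀ k m : Fin n, k < m ↔
    ((T.pos k).2 < (T.pos m).2 ∨ ((T.pos k).2 = (T.pos m).2 ∧ (T.pos k).1 < (T.pos m).1))

/-- `p_Λ`: the sum of all permutations preserving each row of `Λ`. -/
def pElt (T : SkewStdTableau n mu lam) : GA n :=
  ∑ s : Equiv.Perm (Fin n),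
    if ∀ k, (T.pos (s k)).1 = (T.pos k).1 then MonoidAlgebra.of ℂ _ s else 0

/-- `q_Λ`: the signed sum of all permutations preserving each column of `Λ`. -/
def qElt (T : SkewStdTableau n mu lam) : GA n :=
  ∑ s : Equiv.Perm (Fin n),
    if ∀ k, (T.pos (s k)).2 = (T.pos k).2
    then ((Equiv.Perm.sign s : ℤ) : ℂ) • MonoidAlgebra.of ℂ _ s else 0

end SkewStdTableau

/-! ### Ordered products over lexicographically ordered pairs -/

/-- The list of all pairs `(i,j)` with `i < j`, in lexicographic order. -/
def lexPairs (n : ℕ) : List (Fin n × Fin n) :=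
  ((List.finRange n).product (List.finRange n)).filter (fun p => p.1 < p.2)

/-! ### Rational functions: the field of fractions of a polynomial ring -/

/-- The field of rational functions in countably many variables over `ℂ`. -/
abbrev KK : Type := FractionRing (MvPolynomial ℕ ℂ)

/-- The canonical map from polynomials to rational functions. -/
def toKK : MvPolynomial ℕ ℂ →+* KK := algebraMap (MvPolynomial ℕ ℂ) KK

/-- The rational function `g` is regular at the point `x`, with value `v` there:
`g = p/q` with `q(x) ≠ 0` and `p(x)/q(x) = v`. -/
def RegularAtVal (g : KK) (x : ℕ → ℂ) (v : ℂ) : Prop :=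
  ∃ p q : MvPolynomial ℕ ℂ,
    g * toKK q = toKK p ∧ MvPolynomial.eval x q ≠ 0 ∧
      MvPolynomial.eval x p = v * MvPolynomial.eval x q

/-- The group algebra of `S_l` with coefficients in the field `KK`
of rational functions. -/
abbrev GAK (l : ℕ) : Type := MonoidAlgebra KK (Equiv.Perm (Fin l))

/-- A `ℂ S_l`-valued rational function is regular at a point with a given value
iff all its coefficient rational functions are. -/
def GARegularAtVal {l : ℕ} (F : GAK l) (x : ℕ → ℂ) (v : GA l) : Prop :=
  ∀ s : Equiv.Perm (Fin l), RegularAtVal (F.coeff s) x (v.coeff s)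

/-- The factor `1 - (i j)/(c_i - c_j + t_i - t_j)` of the fusion procedure,
where the variable `t_k` is the polynomial variable `X (var k)` (so that the
constraints `t_k = t_m` for `var k = var m` are built in). -/
def fusionFactor {l : ℕ} (c : Fin l → ℤ) (var : Fin l → ℕ) (i j : Fin l) : GAK l :=
  (1 : GAK l) -
    (toKK (MvPolynomial.C ((c i - c j : ℤ) : ℂ)
        + MvPolynomial.X (var i) - MvPolynomial.X (var j)))⁻¹ • swapElt KK i j

/-- The full ordered product `∏→_{1≤i<j≤l} (1 - (i j)/(c_i-c_j+t_i-t_j))`. -/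
def fusionProd {l : ℕ} (c : Fin l → ℤ) (var : Fin l → ℕ) : GAK l :=
  ((lexPairs l).map (fun p => fusionFactor c var p.1 p.2)).prod

/-- The partial ordered product over the lexicographically ordered pairs
`(i,j)`, `i<j`, satisfying the predicate `P`. -/
def fusionProdOn {l : ℕ} (c : Fin l → ℤ) (var : Fin l → ℕ)
    (P : Fin l × Fin l → Prop) : GAK l :=
  (((lexPairs l).filter (fun p => P p)).map (fun p => fusionFactor c var p.1 p.2)).prod

/-- The factor `1 - (i j)/(x - y)` of the fusion procedure, over `ℂ`. -/
def cFactor {l : ℕ} (i j : Fin l) (x y : ℂ) : GA l :=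
  (1 : GA l) - (x - y)⁻¹ • swapElt ℂ i j

/-! ### Operators on tensor powers of ℂ^L, as matrices -/

/-- Index set of the standard basis of `(ℂ^L)^{⊗n}`. -/
abbrev TIdx (L n : ℕ) : Type := Fin n → Fin L

/-- Operators on `(ℂ^L)^{⊗n}` with entries in `R`, encoded as matrices. -/
abbrev TOp (R : Type) (L n : ℕ) : Type := Matrix (TIdx L n) (TIdx L n) R

/-- The operator on `(ℂ^L)^{⊗n}` permuting the tensor factors according
to the permutation `s`. -/
def permMat {L n : ℕ} (s : Equiv.Perm (Fin n)) : TOp ℂ L n :=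
  fun f g => if g = f ∘ s then 1 else 0

/-- The operator `P_{kl}` exchanging the `k`-th and `l`-th tensor factors. -/
def Pmat {L n : ℕ} (k l : Fin n) : TOp ℂ L n := permMat (Equiv.swap k l)

/-- The operator `Q_{kl}` acting as
`Q(L) : u ⊗ v ↦ ⟨u,v⟩ ∑_a u_a ⊗ v_a` in the `k`-th and `l`-th tensor factors
(for the bilinear form with Gram matrix `B`, `⟨u,v⟩ = uᵀ B v`, and dual bases
`u_a, v_a`), and as the identity elsewhere. -/
def Qmat {L n : ℕ} (B : Matrix (Fin L) (Fin L) ℂ) (k l : Fin n) : TOp ℂ L n :=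
  fun f g =>
    if ∀ i, i ≠ k → i ≠ l → g i = f i then B⁻¹ (f l) (f k) * B (g k) (g l) else 0

/-- The action of an element of the group algebra `ℂ S_l` on `(ℂ^L)^{⊗l}`,
by permutations of the tensor factors. -/
def gaMat (L : ℕ) {l : ℕ} (a : GA l) : TOp ℂ L l :=
  Finsupp.sum a.coeff (fun s c => c • permMat s)

/-- The rational R-matrix `R_{kl}(x,y) = 1 - P_{kl}/(x-y)`. -/
def Rmat (L : ℕ) {n : ℕ} (k l : Fin n) (x y : ℂ) : TOp ℂ L n :=
  1 - (x - y)⁻¹ • Pmat k l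

/-- `R̃_{kl}(x,y) = 1 + Q_{kl}/(x+y)`. -/
def Rtil {L : ℕ} (B : Matrix (Fin L) (Fin L) ℂ) {n : ℕ} (k l : Fin n) (x y : ℂ) :
    TOp ℂ L n :=
  1 + (x + y)⁻¹ • Qmat B k l

/-- `R̄_{kl}(x,y) = 1 - Q_{kl}/(x+y+L)`. -/
def Rbar {L : ℕ} (B : Matrix (Fin L) (Fin L) ℂ) {n : ℕ} (k l : Fin n) (x y : ℂ) :
    TOp ℂ L n :=
  1 - (x + y + (L : ℂ))⁻¹ • Qmat B k l

/-- An operator-valued rational function is regular at a point with a given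
value iff all its matrix entries are. -/
def MatRegularAtVal {L n : ℕ} (G : TOp KK L n) (x : ℕ → ℂ) (V : TOp ℂ L n) : Prop :=
  ∀ f g, RegularAtVal (G f g) x (V f g)

/-- The ordered product `∏→ (1 - P_{kl}/(c_k - c_l + t_k - t_l))` over all
lexicographically ordered pairs, with `t_k` the polynomial variable `X (var k)`. -/
def fusionRK (L : ℕ) {n : ℕ} (c : Fin n → ℤ) (var : Fin n → ℕ) : TOp KK L n :=
  ((lexPairs n).map (fun p =>
    (1 : TOp KK L n) -
      (toKK (MvPolynomial.C ((c p.1 - c p.2 : ℤ) : ℂ)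
          + MvPolynomial.X (var p.1) - MvPolynomial.X (var p.2)))⁻¹ •
        (Pmat p.1 p.2).map (algebraMap ℂ KK))).prod

/-- The ordered product `∏→ (1 - Q_{kl}/(c_k + c_l + t_k + t_l + a))` over all
lexicographically ordered pairs, with `t_k` the polynomial variable `X (var k)`. -/
def fusionQK {L : ℕ} (B : Matrix (Fin L) (Fin L) ℂ) {n : ℕ}
    (c : Fin n → ℤ) (var : Fin n → ℕ) (a : ℂ) : TOp KK L n :=
  ((lexPairs n).map (fun p =>
    (1 : TOp KK L n) -
      (toKK (MvPolynomial.C (((c p.1 + c p.2 : ℤ) : ℂ) + a)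
          + MvPolynomial.X (var p.1) + MvPolynomial.X (var p.2)))⁻¹ •
        (Qmat B p.1 p.2).map (algebraMap ℂ KK))).prod




/-- `θ_m`: the linear map on `ℂ S_l` keeping only the permutations which
preserve the subset `{1,…,m}` (0-based: `{0,…,m-1}`). -/
def theta (l m : ℕ) (a : GA l) : GA l :=
  ∑ s : Equiv.Perm (Fin l),
    if ∀ k : Fin l, (k : ℕ) < m → ((s k : ℕ) < m)
    then MonoidAlgebra.single s (a.coeff s) else 0

/-- `γ_m`: the linear map on `ℂ S_{l+1}` keeping only the permutations `s`
with `s(1) ∉ {2,…,m+1}` (0-based: `s 0 ∉ {1,…,m}`). -/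
def gammaMap (l m : ℕ) (a : GA (l + 1)) : GA (l + 1) :=
  ∑ s : Equiv.Perm (Fin (l + 1)),
    if (s 0 = 0 ∨ m < ((s 0 : Fin (l + 1)) : ℕ))
    then MonoidAlgebra.single s (a.coeff s) else 0

/-- `γ'_m`: the linear map on `ℂ S_{l+1}` keeping only the permutations `s`
with `s⁻¹(1) ∉ {2,…,m+1}`. -/
def gammaMap' (l m : ℕ) (a : GA (l + 1)) : GA (l + 1) :=
  ∑ s : Equiv.Perm (Fin (l + 1)),
    if (s⁻¹ 0 = 0 ∨ m < ((s⁻¹ 0 : Fin (l + 1)) : ℕ))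
    then MonoidAlgebra.single s (a.coeff s) else 0

/-- The embedding `S_l → S_{l+1}` induced by the shift `k ↦ k+1` of `{1,…,l}`
onto `{2,…,l+1}` (the new point `1` is fixed). -/
def shiftPerm {l : ℕ} (s : Equiv.Perm (Fin l)) : Equiv.Perm (Fin (l + 1)) :=
  Equiv.permCongr (finCongr (Nat.add_comm 1 l))
    (Equiv.permCongr finSumFinEquiv (Equiv.sumCongr (Equiv.refl (Fin 1)) s))

/-- The embedding `ι_1 : ℂ S_l → ℂ S_{l+1}` induced by the shift `k ↦ k+1`. -/
def iota1 {l : ℕ} (a : GA l) : GA (l + 1) :=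
  MonoidAlgebra.mapDomain shiftPerm a

/-- The permutation of `{1,…,n+1}` fixing `1` and reversing `2,…,n+1`. -/
def revPerm (n : ℕ) : Equiv.Perm (Fin (n + 1)) :=
  Function.Involutive.toPerm
    (fun x => if h : (x : ℕ) = 0 then x
      else ⟨n + 1 - (x : ℕ), by have := x.isLt; omega⟩)
    (by
      intro x
      by_cases h : (x : ℕ) = 0
      · simp [h]
      · have hle : (x : ℕ) ≤ n := Nat.lt_succ_iff.mp x.isLt
        have h1 : 1 ≤ (x : ℕ) := Nat.one_le_iff_ne_zero.mpr h
        simp only [dif_neg h]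
        have h2 : ((⟨n + 1 - (x : ℕ), by omega⟩ : Fin (n + 1)) : ℕ) ≠ 0 := by
          simp only []
          omega
        simp only [dif_neg h2]
        ext
        simp only []
        omega)

/-- Lexicographic strict order on pairs. -/
def lexLT {l : ℕ} (p q : Fin l × Fin l) : Prop :=
  p.1 < q.1 ∨ (p.1 = q.1 ∧ p.2 < q.2)

/-- Lexicographic order on pairs. -/
def lexLE {l : ℕ} (p q : Fin l × Fin l) : Prop := lexLT p q ∨ p = q


/-- The operator `1 ⊗ F` on `(ℂ^L)^{⊗(l+1)}`, acting as `F` in the last `l`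
tensor factors and as the identity in the first one. -/
def extMat {L l : ℕ} (F : TOp ℂ L l) : TOp ℂ L (l + 1) :=
  fun f g => if f 0 = g 0 then F (fun k => f k.succ) (fun k => g k.succ) else 0


/-! ### Auxiliary lemmas for Statement 19 -/

lemma st19_sum_restrict {L n : ℕ} (k m : Fin n) (hkm : k ≠ m) (u : Fin n → Fin L)
    (G : (Fin n → Fin L) → ℂ) :
    ∑ h : Fin n → Fin L, (if ∀ i, i ≠ k → i ≠ m → h i = u i then G h else 0)
      = ∑ p : Fin L × Fin L, G (Function.update (Function.update u k p.1) m p.2) := by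
  rw [← Finset.sum_filter]
  have key : ∀ h ∈ Finset.filter (fun h => ∀ i, i ≠ k → i ≠ m → h i = u i) Finset.univ,
      Function.update (Function.update u k (h k)) m (h m) = h := by
    intro h hh
    simp only [Finset.mem_filter, Finset.mem_univ, true_and] at hh
    funext i
    by_cases him : i = m
    · subst him; simp
    · by_cases hik : i = k
      · subst hik; simp [Function.update_of_ne hkm]
      · simp [Function.update_of_ne him, Function.update_of_ne hik, hh i hik him]
  refine Finset.sum_nbij' (fun h => (h k, h m))
    (fun p => Function.update (Function.update u k p.1) m p.2) ?_ ?_ ?_ ?_ ?_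
  · intro h _; exact Finset.mem_univ _
  · intro p _
    simp only [Finset.mem_filter, Finset.mem_univ, true_and]
    intro i hik him
    simp [Function.update_of_ne hik, Function.update_of_ne him]
  · intro h hh; exact key h hh
  · intro p _
    ext
    · simp [Function.update_of_ne hkm]
    · simp
  · intro h hh; rw [key h hh]

lemma st19_exists_inv_entry {L : ℕ} (hL : 1 ≤ L) (B : Matrix (Fin L) (Fin L) ℂ)
    (hB : IsUnit B.det) : ∃ c d, B⁻¹ c d ≠ 0 := by
  by_contra hcon
  push_neg at hcon
  have hinv : B⁻¹ = 0 := by ext c d; exact hcon c d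
  have h1 : B * B⁻¹ = 1 := Matrix.mul_nonsing_inv B hB
  rw [hinv, mul_zero] at h1
  have i0 : Fin L := ⟨0, hL⟩
  have := congrFun (congrFun h1 i0) i0
  simp [Matrix.one_apply] at this

lemma st19_keyS {L l : ℕ} (hL : 1 ≤ L) (B : Matrix (Fin L) (Fin L) ℂ) (hB : IsUnit B.det)
    (F : TOp ℂ L l) (hF : ∀ i j : Fin l, i ≠ j → Qmat B i j * F = 0)
    (k m : Fin l) (hkm : k ≠ m) (u v : Fin l → Fin L) :
    ∑ p : Fin L × Fin L, B p.1 p.2 *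
      F (Function.update (Function.update u k p.1) m p.2) v = 0 := by
  obtain ⟨c, d, hcd⟩ := st19_exists_inv_entry hL B hB
  set u₀ : Fin l → Fin L := Function.update (Function.update u m c) k d with hu₀
  have h0 : (Qmat B k m * F) u₀ v = 0 := by rw [hF k m hkm]; rfl
  rw [Matrix.mul_apply] at h0
  simp only [Qmat, ite_mul, zero_mul] at h0
  rw [st19_sum_restrict k m hkm u₀] at h0
  have hm0 : u₀ m = c := by simp [hu₀, Function.update_of_ne (Ne.symm hkm)]
  have hk0 : u₀ k = d := by simp [hu₀]
  have harg : ∀ p : Fin L × Fin L,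
      Function.update (Function.update u₀ k p.1) m p.2
        = Function.update (Function.update u k p.1) m p.2 := by
    intro p
    funext i
    by_cases him : i = m
    · subst him; simp
    · by_cases hik : i = k
      · subst hik; simp [Function.update_of_ne hkm]
      · simp [hu₀, Function.update_of_ne him, Function.update_of_ne hik]
  have hupd : ∀ p : Fin L × Fin L,
      (Function.update (Function.update u₀ k p.1) m p.2) k = p.1 ∧
      (Function.update (Function.update u₀ k p.1) m p.2) m = p.2 := by
    intro p
    constructor
    · simp [Function.update_of_ne hkm]
    · simp
  rw [hm0, hk0] at h0
  have h0' : ∑ p : Fin L × Fin L, B⁻¹ c d * (B p.1 p.2 *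
      F (Function.update (Function.update u k p.1) m p.2) v) = 0 := by
    rw [← h0]
    refine Finset.sum_congr rfl ?_
    intro p _
    rw [(hupd p).1, (hupd p).2, harg p, mul_assoc]
  rw [← Finset.mul_sum] at h0'
  exact (mul_eq_zero.mp h0').resolve_left hcd

lemma st19_lemA {L n : ℕ} [NeZero n] (B : Matrix (Fin L) (Fin L) ℂ) (ε : ℂ)
    (hε : ∀ a b, B a b = ε * B b a) (j : Fin n) :
    Qmat B (0 : Fin n) j * Pmat (0 : Fin n) j = ε • Qmat B (0 : Fin n) j := by
  ext f g
  rw [Matrix.mul_apply]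
  have hcond : ∀ h : Fin n → Fin L,
      (g = h ∘ (Equiv.swap (0 : Fin n) j)) ↔ h = g ∘ (Equiv.swap (0 : Fin n) j) := by
    intro h
    constructor <;> intro e <;> funext i
    · have := congrFun e (Equiv.swap (0 : Fin n) j i)
      simpa using this.symm
    · have := congrFun e (Equiv.swap (0 : Fin n) j i)
      simpa using this.symm
  simp only [Pmat, permMat, mul_ite, mul_one, mul_zero]
  calc (∑ h : Fin n → Fin L, if g = h ∘ (Equiv.swap (0:Fin n) j)
          then Qmat B (0:Fin n) j f h else 0)
      = ∑ h : Fin n → Fin L, if h = g ∘ (Equiv.swap (0:Fin n) j)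
          then Qmat B (0:Fin n) j f h else 0 := by
        refine Finset.sum_congr rfl fun h _ => ?_
        exact if_congr (hcond h) rfl rfl
    _ = Qmat B (0:Fin n) j f (g ∘ (Equiv.swap (0:Fin n) j)) := by
        rw [Finset.sum_ite_eq' Finset.univ]
        simp
    _ = (ε • Qmat B (0:Fin n) j) f g := by
        simp only [Qmat, Matrix.smul_apply, smul_eq_mul, Function.comp]
        have e1 : Equiv.swap (0 : Fin n) j 0 = j := Equiv.swap_apply_left _ _
        have e2 : Equiv.swap (0 : Fin n) j j = 0 := Equiv.swap_apply_right _ _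
        have hcc : (∀ i, i ≠ 0 → i ≠ j → g (Equiv.swap (0:Fin n) j i) = f i)
            ↔ (∀ i, i ≠ 0 → i ≠ j → g i = f i) := by
          constructor <;> intro hc i hi0 hij <;>
            [skip; skip] <;>
            have := hc i hi0 hij
          · rwa [Equiv.swap_apply_of_ne_of_ne hi0 hij] at this
          · rwa [Equiv.swap_apply_of_ne_of_ne hi0 hij]
        rw [e1, e2]
        by_cases hc : ∀ i, i ≠ 0 → i ≠ j → g i = f i
        · rw [if_pos (hcc.mpr hc), if_pos hc]
          rw [hε (g j) (g 0)]
          ring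
        · rw [if_neg (fun h => hc (hcc.mp h)), if_neg hc, mul_zero]

lemma st19_lemB {L l : ℕ} (hL : 1 ≤ L) (B : Matrix (Fin L) (Fin L) ℂ) (hB : IsUnit B.det)
    (F : TOp ℂ L l) (hF : ∀ i j : Fin l, i ≠ j → Qmat B i j * F = 0)
    (k m : Fin l) (hkm : k ≠ m) :
    Qmat B (0 : Fin (l+1)) k.succ * (Pmat (0 : Fin (l+1)) m.succ * extMat F) = 0 := by
  ext f g
  rw [Matrix.mul_apply]
  have hPE : ∀ h : Fin (l+1) → Fin L,
      ((Pmat (0 : Fin (l+1)) m.succ * extMat F : TOp ℂ L (l+1))) h g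
        = extMat F (h ∘ (Equiv.swap (0 : Fin (l+1)) m.succ)) g := by
    intro h
    rw [Matrix.mul_apply]
    simp only [Pmat, permMat, ite_mul, one_mul, zero_mul]
    rw [Finset.sum_ite_eq' Finset.univ]
    simp
  simp only [hPE, Qmat, ite_mul, zero_mul]
  rw [st19_sum_restrict (0 : Fin (l+1)) k.succ (Ne.symm (Fin.succ_ne_zero k)) f]
  have hms_ne : m.succ ≠ k.succ := fun e => hkm (Fin.succ_injective _ e).symm
  have hval : ∀ p : Fin L × Fin L,
      (Function.update (Function.update f (0 : Fin (l+1)) p.1) k.succ p.2) 0 = p.1 ∧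
      (Function.update (Function.update f (0 : Fin (l+1)) p.1) k.succ p.2) k.succ = p.2 := by
    intro p
    refine ⟨?_, ?_⟩
    · simp [Function.update_of_ne (Ne.symm (Fin.succ_ne_zero k))]
    · simp
  have harg : ∀ p : Fin L × Fin L,
      (fun t : Fin l =>
        ((Function.update (Function.update f (0 : Fin (l+1)) p.1) k.succ p.2) ∘
          (Equiv.swap (0 : Fin (l+1)) m.succ)) t.succ)
      = Function.update (Function.update (fun t : Fin l => f t.succ) m p.1) k p.2 := by
    intro p
    funext t
    simp only [Function.comp]
    by_cases htm : t = m
    · subst htm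
      rw [Equiv.swap_apply_right]
      simp [Function.update_of_ne (Ne.symm hkm),
        Function.update_of_ne (Ne.symm (Fin.succ_ne_zero k))]
    · have hts : (t.succ : Fin (l+1)) ≠ m.succ := fun e => htm (Fin.succ_injective _ e)
      rw [Equiv.swap_apply_of_ne_of_ne (Fin.succ_ne_zero t) hts]
      by_cases htk : t = k
      · subst htk; simp
      · have hts2 : (t.succ : Fin (l+1)) ≠ k.succ := fun e => htk (Fin.succ_injective _ e)
        simp [Function.update_of_ne hts2, Function.update_of_ne (Fin.succ_ne_zero t),
          Function.update_of_ne htk, Function.update_of_ne htm]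
  have hzero : ∀ p : Fin L × Fin L,
      ((Function.update (Function.update f (0 : Fin (l+1)) p.1) k.succ p.2) ∘
        (Equiv.swap (0 : Fin (l+1)) m.succ)) 0 = f m.succ := by
    intro p
    simp only [Function.comp]
    rw [Equiv.swap_apply_left]
    simp [Function.update_of_ne hms_ne, Function.update_of_ne (Fin.succ_ne_zero m)]
  have hEsimp : ∀ p : Fin L × Fin L,
      extMat F ((Function.update (Function.update f (0 : Fin (l+1)) p.1) k.succ p.2) ∘
        (Equiv.swap (0 : Fin (l+1)) m.succ)) g
      = if f m.succ = g 0 then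
          F (Function.update (Function.update (fun t : Fin l => f t.succ) m p.1) k p.2)
            (fun t : Fin l => g t.succ) else 0 := by
    intro p
    rw [extMat]
    rw [hzero p, harg p]
  calc (∑ p : Fin L × Fin L,
        B⁻¹ (f k.succ) (f 0) *
          B ((Function.update (Function.update f (0:Fin (l+1)) p.1) k.succ p.2) 0)
            ((Function.update (Function.update f (0:Fin (l+1)) p.1) k.succ p.2) k.succ) *
          extMat F ((Function.update (Function.update f (0:Fin (l+1)) p.1) k.succ p.2) ∘
            (Equiv.swap (0 : Fin (l+1)) m.succ)) g)
      = ∑ p : Fin L × Fin L, B⁻¹ (f k.succ) (f 0) *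
          (B p.1 p.2 * (if f m.succ = g 0 then
            F (Function.update (Function.update (fun t : Fin l => f t.succ) m p.1) k p.2)
              (fun t : Fin l => g t.succ) else 0)) := by
        refine Finset.sum_congr rfl fun p _ => ?_
        rw [(hval p).1, (hval p).2, hEsimp p, mul_assoc]
    _ = 0 := by
        rw [← Finset.mul_sum]
        by_cases hfg : f m.succ = g 0
        · simp only [if_pos hfg]
          rw [st19_keyS hL B hB F hF m k (Ne.symm hkm) (fun t : Fin l => f t.succ)
            (fun t : Fin l => g t.succ), mul_zero]
        · simp [if_neg hfg]


theorem statement_19 (L l : ℕ) (hL : 1 ≤ L)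
    (B : Matrix (Fin L) (Fin L) ℂ) (hB : IsUnit B.det) (ε : ℂ)
    (hform : (Bᵀ = B ∧ ε = 1) ∨ (Bᵀ = -B ∧ ε = -1))
    (F : TOp ℂ L l) (hF : ∀ i j : Fin l, i ≠ j → Qmat B i j * F = 0)
    (x : ℂ) (hx1 : x ≠ ε / 2) (hx2 : x ≠ -(ε / 2)) :
    ((1 : TOp ℂ L (l + 1)) +
        (x - ε / 2)⁻¹ • ∑ k : Fin l, Qmat B (0 : Fin (l + 1)) k.succ) *
      ((1 : TOp ℂ L (l + 1)) -
        (x + ε / 2)⁻¹ • ∑ k : Fin l, Pmat (0 : Fin (l + 1)) k.succ) *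
      extMat F
    = ((1 : TOp ℂ L (l + 1)) -
        (x + ε / 2)⁻¹ •
          ∑ k : Fin l, (Pmat (0 : Fin (l + 1)) k.succ - Qmat B (0 : Fin (l + 1)) k.succ)) *
      extMat F := by
  have hε : ∀ a b, B a b = ε * B b a := by
    rcases hform with ⟨hBt, he⟩ | ⟨hBt, he⟩ <;> intro a b
    · have := congrFun (congrFun hBt b) a
      rw [Matrix.transpose_apply] at this
      rw [he, one_mul]; exact this
    · have := congrFun (congrFun hBt b) a
      rw [Matrix.transpose_apply, Matrix.neg_apply] at this
      rw [he]; rw [this]; ring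
  set SQ : TOp ℂ L (l+1) := ∑ k : Fin l, Qmat B (0 : Fin (l + 1)) k.succ with hSQ
  set SP : TOp ℂ L (l+1) := ∑ k : Fin l, Pmat (0 : Fin (l + 1)) k.succ with hSP
  set E : TOp ℂ L (l+1) := extMat F with hE
  have hsub : ∑ k : Fin l, (Pmat (0 : Fin (l + 1)) k.succ - Qmat B (0 : Fin (l + 1)) k.succ)
      = SP - SQ := by
    rw [Finset.sum_sub_distrib]
  rw [hsub]
  have key : SQ * (SP * E) = ε • (SQ * E) := by
    have hrow : ∀ k : Fin l,
        Qmat B (0 : Fin (l+1)) k.succ * (SP * E)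
          = ε • (Qmat B (0 : Fin (l+1)) k.succ * E) := by
      intro k
      rw [hSP, Finset.sum_mul, Finset.mul_sum]
      rw [Finset.sum_eq_single k]
      · rw [← mul_assoc, st19_lemA B ε hε k.succ, smul_mul_assoc]
      · intro m _ hmk
        exact st19_lemB hL B hB F hF k m (Ne.symm hmk)
      · intro hk; exact absurd (Finset.mem_univ k) hk
    rw [hSQ, Finset.sum_mul]
    calc ∑ k : Fin l, Qmat B (0 : Fin (l+1)) k.succ * (SP * E)
        = ∑ k : Fin l, ε • (Qmat B (0 : Fin (l+1)) k.succ * E) :=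
          Finset.sum_congr rfl fun k _ => hrow k
      _ = ε • (SQ * E) := by rw [← Finset.smul_sum, hSQ, Finset.sum_mul]
  have ha : x - ε / 2 ≠ 0 := sub_ne_zero.mpr hx1
  have hb : x + ε / 2 ≠ 0 := by
    intro h; exact hx2 (eq_neg_of_add_eq_zero_left h)
  simp only [mul_add, add_mul, mul_sub, sub_mul, one_mul, mul_one, smul_mul_assoc,
    mul_smul_comm, mul_assoc]
  rw [key]
  have ha' : x * 2 - ε ≠ 0 := by intro h; exact ha (by linear_combination h / 2)
  have hb' : x * 2 + ε ≠ 0 := by intro h; exact hb (by linear_combination h / 2)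
  have hd : x ^ 2 * 4 - ε ^ 2 ≠ 0 := by
    have e : x ^ 2 * 4 - ε ^ 2 = (x * 2 - ε) * (x * 2 + ε) := by ring
    rw [e]; exact mul_ne_zero ha' hb'
  match_scalars <;> (field_simp; try ring)


end
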